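/- Let (Ω, Σ, μ) be a measure space, N ≥ 1, k > 0, and let f₁,…,f_N : Ω → ℂ be measurable, square-integrable functions that are orthonormal: ∫_Ω f_i \overline{f_j} dμ = δ_{ij}. Let C > 0 and let v : [0,1] × Ω → ℝ satisfy: v(0,·) ≡ 0; x ↦ v(t,x) is measurable for each t; |v(t,x) − v(s,x)| ≤ C|t − s| for all x ∈ Ω and t,s ∈ [0,1]; and t ↦ v(t,x) is convex on [0,1] for each x. Let v̇(x) := lim_{t→0⁺} v(t,x)/t (which exists by convexity and the Lipschitz bound, and satisfies |v̇(x)| ≤ C), and assume v̇ is measurable. For t ∈ [0,1] let H(t) be the N×N complex matrix with entries H(t)_{ij} = ∫_Ω f_i \overline{f_j} e^{−k v(t,·)} dμ. Then each H(t) is Hermitian positive definite (so det H(t) is a positive real number), H(0) is the identity matrix, and the right derivative at t = 0 of t ↦ log det H(t) exists and equals −k ∫_Ω v̇(x) ( Σ_{j=1}^N |f_j(x)|² ) dμ(x). -/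

import Mathlib

open MeasureTheory Filter Topology Set
open scoped ComplexConjugate ComplexOrder

/-!
Write `H t` as the Gram matrix of the `fᵢ` for the weight `e^{-k v(t,·)}`. Orthonormality gives
`H 0 = 1`. For `t ∈ [0,1]` the weight lies between `e^{-|k|C}` and `e^{|k|C}`, so `H t` is a
positive multiple of `H 0` plus a positive semidefinite matrix, hence positive definite.
By the Lipschitz bound, the difference quotients of the weight at `0⁺` are uniformly bounded.
Dominated convergence then differentiates `H` entrywise. The derivative is the Gram matrix for
the weight `-k v̇`. At the identity the derivative of `det` is the trace, and `log` has
derivative `1` at `1`, so the derivative of `log det H` at `0⁺` is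
`tr H'(0) = -k ∫ v̇ ∑ |fⱼ|²`.
-/

theorem Real.abs_exp_sub_one_le_abs_mul_exp (x : ℝ) : |exp x - 1| ≤ |x| * exp |x| := by
  have h : ‖Complex.exp x - 1‖ ≤ ‖(x : ℂ)‖ * Real.exp ‖(x : ℂ)‖ := by
    simpa using Complex.norm_exp_sub_sum_le_norm_mul_exp (x : ℂ) 1
  rwa [← Complex.ofReal_exp, ← Complex.ofReal_one, ← Complex.ofReal_sub, Complex.norm_real,
    Complex.norm_real, Real.norm_eq_abs, Real.norm_eq_abs] at h

theorem hasDerivWithinAt_Ici_zero_of_tendsto_div {g : ℝ → ℝ} {d : ℝ} (hg₀ : g 0 = 0)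
    (hg : Tendsto (fun t => g t / t) (𝓝[>] 0) (𝓝 d)) : HasDerivWithinAt g d (Ici 0) 0 := by
  rw [hasDerivWithinAt_iff_tendsto_slope, Ici_sdiff_left]
  refine hg.congr fun t => ?_
  rw [slope_def_field, hg₀, sub_zero, sub_zero]

theorem abs_le_of_tendsto_div {g : ℝ → ℝ} {d C : ℝ}
    (hg : Tendsto (fun t => g t / t) (𝓝[>] 0) (𝓝 d)) (hgC : ∀ t ∈ Ioc (0 : ℝ) 1, |g t| ≤ C * t) :
    |d| ≤ C := by
  refine le_of_tendsto hg.abs ?_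
  filter_upwards [Ioc_mem_nhdsGT zero_lt_one] with t ht
  rw [abs_div, abs_of_pos ht.1, div_le_iff₀ ht.1]
  exact hgC t ht

theorem HasDerivWithinAt.log_re_of_eq_one {F : ℝ → ℂ} {r : ℝ} {s : Set ℝ} {t₀ : ℝ}
    (hF : HasDerivWithinAt F r s t₀) (hF₀ : F t₀ = 1) :
    HasDerivWithinAt (fun t => Real.log (F t).re) r s t₀ := by
  have hre : HasDerivWithinAt (fun t => (F t).re) r s t₀ := by
    simpa [Function.comp_def] using (Complex.reCLM.hasFDerivAt.comp_hasFDerivWithinAt t₀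
      hF.hasFDerivWithinAt).hasDerivWithinAt
  simpa [hF₀] using hre.log (by simp [hF₀])

section DetDeriv

variable {ι : Type*} [Fintype ι] [DecidableEq ι]

theorem Matrix.prod_erase_one_apply_perm_eq_zero {R : Type*} [CommMonoidWithZero R]
    {σ : Equiv.Perm ι} (hσ : σ ≠ 1) (i : ι) :
    ∏ j ∈ Finset.univ.erase i, (1 : Matrix ι ι R) (σ j) j = 0 := by
  obtain ⟨j, hji, hj⟩ : ∃ j ∈ Finset.univ.erase i, σ j ≠ j := by
    by_contra! hfix
    refine hσ (Equiv.ext fun j => ?_)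
    by_cases hji : j = i
    · subst hji
      by_contra hne
      exact hne (σ.injective (hfix _ (Finset.mem_erase.2 ⟨hne, Finset.mem_univ _⟩)))
    · exact hfix j (Finset.mem_erase.2 ⟨hji, Finset.mem_univ _⟩)
  exact Finset.prod_eq_zero hji (Matrix.one_apply_ne hj)

theorem hasDerivWithinAt_det_of_eq_one {𝔸 : Type*} [NormedCommRing 𝔸] [NormedAlgebra ℝ 𝔸]
    {M : ℝ → Matrix ι ι 𝔸} {M' : Matrix ι ι 𝔸} {s : Set ℝ}
    {t₀ : ℝ} (hM₀ : M t₀ = 1) (hM : ∀ i j, HasDerivWithinAt (fun t => M t i j) (M' i j) s t₀) :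
    HasDerivWithinAt (fun t => (M t).det) M'.trace s t₀ := by
  have hLeibniz := HasDerivWithinAt.fun_sum (u := Finset.univ) fun (σ : Equiv.Perm ι) _ =>
    (HasDerivWithinAt.fun_finsetProd (u := Finset.univ) fun i _ => hM (σ i) i).const_mul
      ((Equiv.Perm.sign σ : ℤ) : 𝔸)
  -- At `M t₀ = 1` only the identity permutation contributes to the Leibniz expansion.
  refine (hLeibniz.congr_deriv ?_).congr (fun t _ => Matrix.det_apply' (M t))
    (Matrix.det_apply' (M t₀))
  rw [Finset.sum_eq_single (1 : Equiv.Perm ι)]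
  · simp [hM₀, Matrix.trace]
  · intro σ _ hσ
    simp [hM₀, Matrix.prod_erase_one_apply_perm_eq_zero hσ]
  · simp

end DetDeriv

section WeightedGram

open scoped Matrix

variable {Ω ι : Type*} [MeasurableSpace Ω] {μ : Measure Ω} {f : ι → Ω → ℂ}

theorem memLp_top_exp_of_abs_le {g : Ω → ℝ} {B : ℝ} (hg : AEStronglyMeasurable g μ)
    (hgB : ∀ᵐ x ∂μ, |g x| ≤ B) : MemLp (fun x => Real.exp (g x)) ⊤ μ := by
  refine memLp_top_of_bound (Real.continuous_exp.comp_aestronglyMeasurable hg) (Real.exp B) ?_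
  filter_upwards [hgB] with x hx
  rw [Real.norm_eq_abs, abs_of_pos (Real.exp_pos _)]
  exact Real.exp_le_exp.2 ((le_abs_self _).trans hx)

noncomputable def weightedGram (μ : Measure Ω) (f : ι → Ω → ℂ) (w : Ω → ℝ) : Matrix ι ι ℂ :=
  Matrix.of fun i j => ∫ x, f i x * conj (f j x) * (w x : ℂ) ∂μ

theorem weightedGram_apply (w : Ω → ℝ) (i j : ι) :
    weightedGram μ f w i j = ∫ x, f i x * conj (f j x) * (w x : ℂ) ∂μ := rfl

theorem integrable_mul_conj_mul_ofReal {g h : Ω → ℂ} {w : Ω → ℝ} (hg : MemLp g 2 μ)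
    (hh : MemLp h 2 μ) (hw : MemLp w ⊤ μ) :
    Integrable (fun x => g x * conj (h x) * (w x : ℂ)) μ :=
  (hg.integrable_mul hh.star).mul_of_top_left hw.ofReal

theorem weightedGram_add (hf : ∀ i, MemLp (f i) 2 μ) {w₁ w₂ : Ω → ℝ} (hw₁ : MemLp w₁ ⊤ μ)
    (hw₂ : MemLp w₂ ⊤ μ) :
    weightedGram μ f (w₁ + w₂) = weightedGram μ f w₁ + weightedGram μ f w₂ := by
  ext i j
  simp only [Matrix.add_apply, weightedGram_apply, ← integral_add
    (integrable_mul_conj_mul_ofReal (hf i) (hf j) hw₁)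
    (integrable_mul_conj_mul_ofReal (hf i) (hf j) hw₂), Pi.add_apply, Complex.ofReal_add, mul_add]

theorem weightedGram_smul (a : ℝ) (w : Ω → ℝ) :
    weightedGram μ f (a • w) = a • weightedGram μ f w := by
  ext i j
  simp only [Matrix.smul_apply, weightedGram_apply, Complex.real_smul, ← integral_const_mul,
    Pi.smul_apply, smul_eq_mul, Complex.ofReal_mul]
  congr 1 with x
  ring

theorem isHermitian_weightedGram (w : Ω → ℝ) : (weightedGram μ f w).IsHermitian := by
  ext i j
  simp only [Matrix.conjTranspose_apply, weightedGram_apply, RCLike.star_def, ← integral_conj,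
    map_mul, Complex.conj_conj, Complex.conj_ofReal]
  congr 1 with x
  ring

theorem hasDerivWithinAt_weightedGram_apply {w : ℝ → Ω → ℝ} {w' : Ω → ℝ} {s : Set ℝ} {t₀ L : ℝ}
    (hf : ∀ i, MemLp (f i) 2 μ) (hw : ∀ t ∈ s, MemLp (w t) ⊤ μ) (ht₀ : t₀ ∈ s)
    (hlip : ∀ t ∈ s, ∀ᵐ x ∂μ, |w t x - w t₀ x| ≤ L * |t - t₀|)
    (hderiv : ∀ᵐ x ∂μ, HasDerivWithinAt (w · x) (w' x) s t₀) (i j : ι) :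
    HasDerivWithinAt (fun t => weightedGram μ f (w t) i j) (weightedGram μ f w' i j) s t₀ := by
  have hs : ∀ᶠ t in 𝓝[s \ {t₀}] t₀, t ∈ s ∧ t ≠ t₀ := self_mem_nhdsWithin
  have hslope : ∀ᶠ t in 𝓝[s \ {t₀}] t₀,
      slope (fun t => weightedGram μ f (w t) i j) t₀ t
        = ∫ x, f i x * conj (f j x) * (slope (w · x) t₀ t : ℂ) ∂μ := by
    filter_upwards [hs] with t hts
    rw [slope_def_module, weightedGram_apply, weightedGram_apply, ← integral_sub
      (integrable_mul_conj_mul_ofReal (hf i) (hf j) (hw t hts.1))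
      (integrable_mul_conj_mul_ofReal (hf i) (hf j) (hw t₀ ht₀)), ← integral_smul]
    congr 1 with x
    rw [slope_def_field, Complex.real_smul]
    push_cast
    ring
  rw [hasDerivWithinAt_iff_tendsto_slope]
  refine Tendsto.congr' (EventuallyEq.symm hslope) <|
    tendsto_integral_filter_of_dominated_convergence (fun x => L * (‖f i x‖ * ‖f j x‖)) ?_ ?_
      (((hf i).norm.integrable_mul (hf j).norm).const_mul L) ?_
  · filter_upwards [hs] with t hts
    exact ((hf i).1.mul (hf j).1.star).mul (Complex.continuous_ofReal.comp_aestronglyMeasurable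
      (((hw t hts.1).1.sub (hw t₀ ht₀).1).const_smul (t - t₀)⁻¹))
  · filter_upwards [hs] with t hts
    filter_upwards [hlip t hts.1] with x hx
    have hslope_le : |slope (w · x) t₀ t| ≤ L := by
      rwa [slope_def_field, abs_div, div_le_iff₀ (abs_pos.2 (sub_ne_zero.2 hts.2))]
    rw [norm_mul, norm_mul, Complex.norm_conj, Complex.norm_real, Real.norm_eq_abs, mul_comm L]
    exact mul_le_mul_of_nonneg_left hslope_le (by positivity)
  · filter_upwards [hderiv] with x hx
    exact tendsto_const_nhds.mul ((Complex.continuous_ofReal.tendsto _).comp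
      (hasDerivWithinAt_iff_tendsto_slope.1 hx))

theorem hasDerivWithinAt_weightedGram_exp_neg_mul_apply (hf : ∀ i, MemLp (f i) 2 μ) (k : ℝ)
    {v : ℝ → Ω → ℝ} {v' : Ω → ℝ} {C : ℝ} (hC : 0 ≤ C) (hvm : ∀ t, AEStronglyMeasurable (v t) μ)
    (hv₀ : ∀ x, v 0 x = 0) (hvC : ∀ t ∈ Icc (0 : ℝ) 1, ∀ x, |v t x| ≤ C * t)
    (hv' : ∀ x, Tendsto (fun t => v t x / t) (𝓝[>] 0) (𝓝 (v' x))) (i j : ι) :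
    HasDerivWithinAt (fun t => weightedGram μ f (fun x => Real.exp (-(k * v t x))) i j)
      (weightedGram μ f (fun x => -(k * v' x)) i j) (Icc 0 1) 0 := by
  set M := |k| * C
  have hkv : ∀ t ∈ Icc (0 : ℝ) 1, ∀ x, |-(k * v t x)| ≤ M * t := fun t ht x => by
    rw [abs_neg, abs_mul, mul_assoc]
    exact mul_le_mul_of_nonneg_left (hvC t ht x) (abs_nonneg k)
  have hkv₁ : ∀ t ∈ Icc (0 : ℝ) 1, ∀ x, |-(k * v t x)| ≤ M := fun t ht x =>
    (hkv t ht x).trans (mul_le_of_le_one_right (mul_nonneg (abs_nonneg k) hC) ht.2)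
  have hderiv x :
      HasDerivWithinAt (fun t => Real.exp (-(k * v t x))) (-(k * v' x)) (Icc 0 1) 0 := by
    simpa [hv₀] using (((hasDerivWithinAt_Ici_zero_of_tendsto_div (hv₀ x) (hv' x)).const_mul k).neg
      |>.mono Icc_subset_Ici_self).exp
  refine hasDerivWithinAt_weightedGram_apply hf
    (fun t ht => memLp_top_exp_of_abs_le ((hvm t).const_mul k).neg (ae_of_all _ (hkv₁ t ht)))
    (left_mem_Icc.2 zero_le_one) (L := M * Real.exp M) (fun t ht => ae_of_all _ fun x => ?_)
    (ae_of_all _ hderiv) i j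
  calc |Real.exp (-(k * v t x)) - Real.exp (-(k * v 0 x))|
      ≤ |-(k * v t x)| * Real.exp |-(k * v t x)| := by
        simpa [hv₀] using Real.abs_exp_sub_one_le_abs_mul_exp (-(k * v t x))
    _ ≤ M * t * Real.exp M :=
        mul_le_mul (hkv t ht x) (Real.exp_le_exp.2 (hkv₁ t ht x)) (Real.exp_pos _).le
          ((abs_nonneg _).trans (hkv t ht x))
    _ = M * Real.exp M * |t - 0| := by
        rw [sub_zero, abs_of_nonneg ht.1]
        ring

variable [Fintype ι]

theorem star_dotProduct_weightedGram_mulVec (hf : ∀ i, MemLp (f i) 2 μ) {w : Ω → ℝ}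
    (hw : MemLp w ⊤ μ) (c : ι → ℂ) :
    star c ⬝ᵥ (weightedGram μ f w *ᵥ c) = ∫ x, ‖∑ i, conj (c i) * f i x‖ ^ 2 * w x ∂μ := by
  have hint i j : Integrable (fun x => conj (c i) * c j * (f i x * conj (f j x) * (w x : ℂ))) μ :=
    (integrable_mul_conj_mul_ofReal (hf i) (hf j) hw).const_mul _
  calc star c ⬝ᵥ (weightedGram μ f w *ᵥ c)
      = ∑ i, ∑ j, ∫ x, conj (c i) * c j * (f i x * conj (f j x) * (w x : ℂ)) ∂μ := by
        simp only [dotProduct, Matrix.mulVec, Finset.mul_sum, weightedGram_apply,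
          Pi.star_apply, RCLike.star_def]
        refine Finset.sum_congr rfl fun i _ => Finset.sum_congr rfl fun j _ => ?_
        rw [integral_const_mul]
        ring
    _ = ∫ x, ∑ i, ∑ j, conj (c i) * c j * (f i x * conj (f j x) * (w x : ℂ)) ∂μ := by
        rw [integral_finsetSum _ fun i _ => integrable_finsetSum _ fun j _ => hint i j]
        simp_rw [integral_finsetSum _ fun j _ => hint _ j]
    _ = ∫ x, ((‖∑ i, conj (c i) * f i x‖ ^ 2 * w x : ℝ) : ℂ) ∂μ := by
        congr 1 with x
        rw [Complex.ofReal_mul, Complex.ofReal_pow, ← Complex.mul_conj', map_sum,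
          Finset.sum_mul_sum, Finset.sum_mul]
        simp only [map_mul, Complex.conj_conj, Finset.sum_mul]
        congr 1 with i
        congr 1 with j
        ring
    _ = _ := integral_ofReal

theorem weightedGram_posSemidef (hf : ∀ i, MemLp (f i) 2 μ) {w : Ω → ℝ} (hw : MemLp w ⊤ μ)
    (hw₀ : 0 ≤ᵐ[μ] w) : (weightedGram μ f w).PosSemidef := by
  refine .of_dotProduct_mulVec_nonneg (isHermitian_weightedGram w) fun c => ?_
  rw [star_dotProduct_weightedGram_mulVec hf hw, Complex.zero_le_real]
  exact integral_nonneg_of_ae (hw₀.mono fun x hx => mul_nonneg (sq_nonneg _) hx)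

theorem weightedGram_posDef (hf : ∀ i, MemLp (f i) 2 μ) {w : Ω → ℝ} (hw : MemLp w ⊤ μ)
    (hG : (weightedGram μ f 1).PosDef) {ε : ℝ} (hε : 0 < ε) (hwε : ∀ᵐ x ∂μ, ε ≤ w x) :
    (weightedGram μ f w).PosDef := by
  have hε₁ : MemLp (ε • 1 : Ω → ℝ) ⊤ μ := (memLp_top_const 1).const_smul ε
  rw [← add_sub_cancel (ε • 1) w, weightedGram_add hf hε₁ (hw.sub hε₁), weightedGram_smul]
  refine (hG.smul hε).add_posSemidef (weightedGram_posSemidef hf (hw.sub hε₁) ?_)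
  filter_upwards [hwε] with x hx
  simpa using hx

theorem trace_weightedGram (hf : ∀ i, MemLp (f i) 2 μ) {w : Ω → ℝ} (hw : MemLp w ⊤ μ) :
    (weightedGram μ f w).trace = ∫ x, w x * ∑ i, ‖f i x‖ ^ 2 ∂μ := by
  simp only [Matrix.trace, Matrix.diag, weightedGram_apply]
  rw [← integral_finsetSum _ fun i _ => integrable_mul_conj_mul_ofReal (hf i) (hf i) hw,
    ← integral_complex_ofReal]
  congr 1 with x
  push_cast
  rw [Finset.mul_sum]
  congr 1 with i
  rw [Complex.mul_conj']
  ring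

theorem posDef_weightedGram_exp (hf : ∀ i, MemLp (f i) 2 μ) (hG : (weightedGram μ f 1).PosDef)
    {g : Ω → ℝ} {B : ℝ} (hg : AEStronglyMeasurable g μ) (hgB : ∀ x, |g x| ≤ B) :
    (weightedGram μ f fun x => Real.exp (g x)).PosDef :=
  weightedGram_posDef hf (memLp_top_exp_of_abs_le hg (ae_of_all _ hgB)) hG (Real.exp_pos (-B))
    (ae_of_all _ fun x => Real.exp_le_exp.2 (neg_le_of_abs_le (hgB x)))

end WeightedGram

theorem stmt5_general {Ω : Type*} [MeasurableSpace Ω] (μ : Measure Ω)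
    (N : ℕ) (k : ℝ)
    (f : Fin N → Ω → ℂ)
    (hfL2 : ∀ j, MemLp (f j) 2 μ)
    (horth : ∀ i j, (∫ x, f i x * conj (f j x) ∂μ) = if i = j then 1 else 0)
    (C : ℝ) (hC : 0 < C) (v : ℝ → Ω → ℝ)
    (hv0 : ∀ x, v 0 x = 0)
    (hvm : ∀ t, Measurable (v t))
    (hvLip : ∀ x, ∀ t ∈ Set.Icc (0:ℝ) 1, ∀ s ∈ Set.Icc (0:ℝ) 1,
      |v t x - v s x| ≤ C * |t - s|)
    (vdot : Ω → ℝ) (hvdotm : Measurable vdot)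
    (hvdot : ∀ x, Tendsto (fun t => v t x / t) (𝓝[>] 0) (𝓝 (vdot x)))
    (H : ℝ → Matrix (Fin N) (Fin N) ℂ)
    (hH : ∀ t i j, H t i j
        = ∫ x, f i x * conj (f j x) * (Real.exp (-(k * v t x)) : ℂ) ∂μ) :
    (∀ t ∈ Set.Icc (0:ℝ) 1, (H t).PosDef ∧ (H t).det.im = 0 ∧ 0 < (H t).det.re) ∧
    H 0 = 1 ∧
    HasDerivWithinAt (fun t => Real.log ((H t).det.re))
      (-k * ∫ x, vdot x * ∑ j, ‖f j x‖ ^ 2 ∂μ) (Set.Ici 0) 0 := by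
  have hHw t : H t = weightedGram μ f fun x => Real.exp (-(k * v t x)) := Matrix.ext (hH t)
  have hG₁ : weightedGram μ f 1 = 1 := by
    ext i j
    simp [weightedGram_apply, horth, Matrix.one_apply]
  have hH₀ : H 0 = 1 := by
    rw [hHw, ← hG₁]
    congr with x
    simp [hv0]
  have hvC : ∀ t ∈ Icc (0 : ℝ) 1, ∀ x, |v t x| ≤ C * t := fun t ht x => by
    simpa [hv0, abs_of_nonneg ht.1] using hvLip x t ht 0 (left_mem_Icc.2 zero_le_one)
  have hpos : ∀ t ∈ Icc (0 : ℝ) 1, (H t).PosDef := fun t ht =>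
    hHw t ▸ posDef_weightedGram_exp hfL2 (hG₁ ▸ .one) ((hvm t).const_mul k).neg.aestronglyMeasurable
      fun x => by
        rw [abs_neg, abs_mul]
        exact mul_le_mul_of_nonneg_left ((hvC t ht x).trans (mul_le_of_le_one_right hC.le ht.2))
          (abs_nonneg k)
  have hderiv i j : HasDerivWithinAt (fun t => H t i j)
      (weightedGram μ f (fun x => -(k * vdot x)) i j) (Icc 0 1) 0 := by
    simp_rw [hHw]
    exact hasDerivWithinAt_weightedGram_exp_neg_mul_apply hfL2 k hC.le
      (fun t => (hvm t).aestronglyMeasurable) hv0 hvC hvdot i j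
  have hvdotL : MemLp vdot ⊤ μ := memLp_top_of_bound hvdotm.aestronglyMeasurable C <|
    ae_of_all _ fun x =>
      abs_le_of_tendsto_div (hvdot x) fun t ht => hvC t (Ioc_subset_Icc_self ht) x
  refine ⟨fun t ht => ?_, hH₀, ?_⟩
  · obtain ⟨hre, him⟩ := Complex.pos_iff.1 (hpos t ht).det_pos
    exact ⟨hpos t ht, him.symm, hre⟩
  · have hdet := hasDerivWithinAt_det_of_eq_one hH₀ hderiv
    rw [trace_weightedGram (w := fun x => -(k * vdot x)) hfL2 (hvdotL.const_mul k).neg] at hdet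
    refine ((hdet.log_re_of_eq_one (by rw [hH₀, Matrix.det_one])).mono_of_mem_nhdsWithin
      (Icc_mem_nhdsGE zero_lt_one)).congr_deriv ?_
    simp only [neg_mul, mul_assoc, integral_neg, integral_const_mul]

/-- Variational formula for the weighted Gram matrix along a Lipschitz convex path of
weights: the matrices `H t` with entries `∫ fᵢ conj fⱼ e^{−k v(t,·)} dμ` are Hermitian
positive definite with positive real determinant, `H 0 = 1`, and the right derivative of
`t ↦ log det H t` at `t = 0` exists and equals `−k ∫ v̇ (∑ⱼ |fⱼ|²) dμ`. -/
theorem stmt5 {Ω : Type*} [MeasurableSpace Ω] (μ : Measure Ω)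
    (N : ℕ) (hN : 1 ≤ N) (k : ℝ) (hk : 0 < k)
    (f : Fin N → Ω → ℂ)
    (hfm : ∀ j, Measurable (f j)) (hfL2 : ∀ j, MemLp (f j) 2 μ)
    (horth : ∀ i j, (∫ x, f i x * conj (f j x) ∂μ) = if i = j then 1 else 0)
    (C : ℝ) (hC : 0 < C) (v : ℝ → Ω → ℝ)
    (hv0 : ∀ x, v 0 x = 0)
    (hvm : ∀ t, Measurable (v t))
    (hvLip : ∀ x, ∀ t ∈ Set.Icc (0:ℝ) 1, ∀ s ∈ Set.Icc (0:ℝ) 1,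
      |v t x - v s x| ≤ C * |t - s|)
    (hvconv : ∀ x, ConvexOn ℝ (Set.Icc (0:ℝ) 1) (fun t => v t x))
    (vdot : Ω → ℝ) (hvdotm : Measurable vdot)
    (hvdot : ∀ x, Tendsto (fun t => v t x / t) (𝓝[>] 0) (𝓝 (vdot x)))
    (H : ℝ → Matrix (Fin N) (Fin N) ℂ)
    (hH : ∀ t i j, H t i j
        = ∫ x, f i x * conj (f j x) * (Real.exp (-(k * v t x)) : ℂ) ∂μ) :
    (∀ t ∈ Set.Icc (0:ℝ) 1, (H t).PosDef ∧ (H t).det.im = 0 ∧ 0 < (H t).det.re) ∧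
    H 0 = 1 ∧
    HasDerivWithinAt (fun t => Real.log ((H t).det.re))
      (-k * ∫ x, vdot x * ∑ j, ‖f j x‖ ^ 2 ∂μ) (Set.Ici 0) 0 :=
  stmt5_general μ N k f hfL2 horth C hC v hv0 hvm hvLip vdot hvdotm hvdot H hH
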